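/- arXiv:2011.02876 — 5 statements merged into one kernel-verified Lean document; each statement's English description precedes it below -/
import Mathlib

section
/- Let p and q be probability density functions on a finite type α (nonnegative, summing to 1). Define the optimal discriminator D*(x) = p(x) / (p(x) + q(x)) (where p(x)+q(x) > 0 for all x). Then for any function D : α → (0,1), ∑ x, p(x) * log(D(x)) + q(x) * log(1 - D(x)) ≤ ∑ x, p(x) * log(D*(x)) + q(x) * log(1 - D*(x)). -/
/-!
For fixed `a, b ≥ 0` the map `t ↦ a log t + b log (1 - t)` on `(0, 1)` is maximised at
`t = a / (a + b)`. Applying `log x ≤ x - 1` at `x = t / (a / (a + b))` and at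
`x = (1 - t) / (b / (a + b))`, the two error terms `(a + b) t - a` and `(a + b) (1 - t) - b`
cancel. The value function is a sum of such terms, so it is maximised pointwise.
-/

open Real

lemma mul_log_le_mul_log_div_add {a s t : ℝ} (ha : 0 ≤ a) (hs : 0 < s) (ht : 0 < t) :
    a * log t ≤ a * log (a / s) + (s * t - a) := by
  rcases ha.eq_or_lt with rfl | ha
  · simpa using (mul_pos hs ht).le
  calc a * log t = a * log (a / s) + a * log (t / (a / s)) := by
        rw [log_div ht.ne' (by positivity)]; ring
    _ ≤ a * log (a / s) + a * (t / (a / s) - 1) := by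
        gcongr; exact log_le_sub_one_of_pos (by positivity)
    _ = a * log (a / s) + (s * t - a) := by field_simp

lemma mul_log_add_mul_log_one_sub_le {a b t : ℝ} (ha : 0 ≤ a) (hb : 0 ≤ b) (hab : 0 < a + b)
    (ht : t ∈ Set.Ioo (0 : ℝ) 1) :
    a * log t + b * log (1 - t) ≤
      a * log (a / (a + b)) + b * log (1 - a / (a + b)) := by
  have hpos := mul_log_le_mul_log_div_add ha hab ht.1
  have hneg := mul_log_le_mul_log_div_add hb hab (sub_pos.2 ht.2)
  rw [one_sub_div hab.ne', add_sub_cancel_left]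
  linarith

theorem stmt_3_general {α : Type*} [Fintype α] (p q : α → ℝ)
    (hp : ∀ x, 0 ≤ p x) (hq : ∀ x, 0 ≤ q x)
    (hpq : ∀ x, 0 < p x + q x)
    (D : α → ℝ) (hD : ∀ x, D x ∈ Set.Ioo (0 : ℝ) 1) :
    ∑ x, (p x * Real.log (D x) + q x * Real.log (1 - D x)) ≤
    ∑ x, (p x * Real.log (p x / (p x + q x)) +
          q x * Real.log (1 - p x / (p x + q x))) :=
  Finset.sum_le_sum fun x _ => mul_log_add_mul_log_one_sub_le (hp x) (hq x) (hpq x) (hD x)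

theorem stmt_3 {α : Type*} [Fintype α] (p q : α → ℝ)
    (hp : ∀ x, 0 ≤ p x) (hq : ∀ x, 0 ≤ q x)
    (hpq : ∀ x, 0 < p x + q x)
    (hps : ∑ x, p x = 1) (hqs : ∑ x, q x = 1)
    (D : α → ℝ) (hD : ∀ x, D x ∈ Set.Ioo (0 : ℝ) 1) :
    ∑ x, (p x * Real.log (D x) + q x * Real.log (1 - D x)) ≤
    ∑ x, (p x * Real.log (p x / (p x + q x)) +
          q x * Real.log (1 - p x / (p x + q x))) :=
  stmt_3_general p q hp hq hpq D hD
end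

section
/- Let p and q be probability mass functions on a finite type α with p(x) + q(x) > 0 for all x. Then ∑ x, p(x)*log(p(x)/(p(x)+q(x))) + q(x)*log(q(x)/(p(x)+q(x))) = -log 4 + 2 * JSD(p, q), where JSD(p,q) = (1/2)*KL(p ‖ m) + (1/2)*KL(q ‖ m) with m = (p+q)/2, under the convention 0 * log 0 = 0. -/
open Real Finset

theorem mul_log_div_div_eq_add {f s c : ℝ} (hs : s ≠ 0) (hc : c ≠ 0) :
    f * log (f / (s / c)) = f * log (f / s) + f * log c := by
  rcases eq_or_ne f 0 with rfl | hf
  · simp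
  · rw [div_div_eq_mul_div, mul_div_right_comm, log_mul (div_ne_zero hf hs) hc, mul_add]

theorem sum_mul_log_div_div_const {α : Type*} [Fintype α] {w s : α → ℝ} {c : ℝ}
    (hw : ∑ x, w x = 1) (hs : ∀ x, s x ≠ 0) (hc : c ≠ 0) :
    ∑ x, w x * log (w x / (s x / c)) = ∑ x, w x * log (w x / s x) + log c := by
  simp_rw [mul_log_div_div_eq_add (hs _) hc, sum_add_distrib, ← sum_mul, hw, one_mul]

theorem stmt_4_general {α : Type*} [Fintype α] (p q : α → ℝ)
    (hpq : ∀ x, 0 < p x + q x)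
    (hps : ∑ x, p x = 1) (hqs : ∑ x, q x = 1) :
    ∑ x, (p x * Real.log (p x / (p x + q x)) + q x * Real.log (q x / (p x + q x))) =
    -Real.log 4 + 2 * ((1 / 2) * ∑ x, p x * Real.log (p x / ((p x + q x) / 2)) +
                       (1 / 2) * ∑ x, q x * Real.log (q x / ((p x + q x) / 2))) := by
  have hpq' : ∀ x, p x + q x ≠ 0 := fun x => (hpq x).ne'
  have hlog4 : log 4 = 2 * log 2 := by
    rw [show (4 : ℝ) = 2 ^ 2 by norm_num, log_pow, Nat.cast_ofNat]
  rw [sum_mul_log_div_div_const hps hpq' two_ne_zero,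
    sum_mul_log_div_div_const hqs hpq' two_ne_zero, hlog4, sum_add_distrib]
  ring

theorem stmt_4 {α : Type*} [Fintype α] (p q : α → ℝ)
    (hp : ∀ x, 0 ≤ p x) (hq : ∀ x, 0 ≤ q x)
    (hpq : ∀ x, 0 < p x + q x)
    (hps : ∑ x, p x = 1) (hqs : ∑ x, q x = 1) :
    ∑ x, (p x * Real.log (p x / (p x + q x)) + q x * Real.log (q x / (p x + q x))) =
    -Real.log 4 + 2 * ((1 / 2) * ∑ x, p x * Real.log (p x / ((p x + q x) / 2)) +
                       (1 / 2) * ∑ x, q x * Real.log (q x / ((p x + q x) / 2))) :=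
  stmt_4_general p q hpq hps hqs
end

section
/- Let p, q : α → ℝ be nonnegative on a finite type α with ∑ p = 1, W > 0 a constant with ∑ x, W*q(x) = 1 and p(x)+W*q(x) > 0 for all x. Then ∑ x, p(x)*log( p(x)/(p(x)+W*q(x)) ) + W*q(x)*log( W*q(x)/(p(x)+W*q(x)) ) ≥ -log 4, with equality if and only if p(x) = W*q(x) for all x. -/
/-!
Pointwise, with `s = a + b`, the term `a log (a/s) + b log (b/s)` equals `-s · H(a/s)` for the
binary entropy `H`, and `H ≤ log 2` with equality exactly at `1/2`, i.e. at `a = b`. Summing the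
pointwise bound `≥ -s log 2` over `x` uses that the total mass `∑ (p + W q)` is `2`, which gives
`-2 log 2 = -log 4`.
-/

open Real

lemma mul_log_div_add_mul_log_div_eq_neg_mul_binEntropy {a b : ℝ} (h : a + b ≠ 0) :
    a * log (a / (a + b)) + b * log (b / (a + b)) = -((a + b) * binEntropy (a / (a + b))) := by
  have hb : 1 - a / (a + b) = b / (a + b) := by field_simp; ring
  rw [binEntropy, hb, log_inv, log_inv]
  field_simp
  ring

lemma neg_mul_log_two_le_mul_log_div_add_mul_log_div {a b : ℝ} (h : 0 < a + b) :
    -((a + b) * log 2) ≤ a * log (a / (a + b)) + b * log (b / (a + b)) := by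
  rw [mul_log_div_add_mul_log_div_eq_neg_mul_binEntropy h.ne', neg_le_neg_iff]
  exact mul_le_mul_of_nonneg_left binEntropy_le_log_two h.le

lemma neg_mul_log_two_eq_mul_log_div_add_mul_log_div_iff {a b : ℝ} (h : 0 < a + b) :
    -((a + b) * log 2) = a * log (a / (a + b)) + b * log (b / (a + b)) ↔ a = b := by
  rw [mul_log_div_add_mul_log_div_eq_neg_mul_binEntropy h.ne', neg_inj,
    mul_right_inj' h.ne', eq_comm, binEntropy_eq_log_two, div_eq_iff h.ne']
  constructor <;> intro <;> linarith

theorem stmt_9_general {α : Type*} [Fintype α] (p q : α → ℝ) (W : ℝ)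
    (hps : ∑ x, p x = 1) (hWqs : ∑ x, W * q x = 1)
    (hpq : ∀ x, 0 < p x + W * q x) :
    -Real.log 4 ≤
      ∑ x, (p x * Real.log (p x / (p x + W * q x)) +
            W * q x * Real.log (W * q x / (p x + W * q x))) ∧
    (∑ x, (p x * Real.log (p x / (p x + W * q x)) +
           W * q x * Real.log (W * q x / (p x + W * q x))) = -Real.log 4 ↔
      ∀ x, p x = W * q x) := by
  have hmass : ∑ x, -((p x + W * q x) * log 2) = -log 4 := by
    rw [Finset.sum_neg_distrib, ← Finset.sum_mul, Finset.sum_add_distrib, hps, hWqs,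
      show (4 : ℝ) = 2 ^ 2 by norm_num, log_pow]
    ring
  have hle : ∀ x ∈ Finset.univ, -((p x + W * q x) * log 2) ≤
      p x * log (p x / (p x + W * q x)) + W * q x * log (W * q x / (p x + W * q x)) :=
    fun x _ => neg_mul_log_two_le_mul_log_div_add_mul_log_div (hpq x)
  rw [← hmass, eq_comm, Finset.sum_eq_sum_iff_of_le hle]
  refine ⟨Finset.sum_le_sum hle, ?_⟩
  simp only [Finset.mem_univ, true_imp_iff,
    neg_mul_log_two_eq_mul_log_div_add_mul_log_div_iff (hpq _)]

theorem stmt_9 {α : Type*} [Fintype α] (p q : α → ℝ) (W : ℝ)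
    (hp : ∀ x, 0 ≤ p x) (hq : ∀ x, 0 ≤ q x) (hW : 0 < W)
    (hps : ∑ x, p x = 1) (hWqs : ∑ x, W * q x = 1)
    (hpq : ∀ x, 0 < p x + W * q x) :
    -Real.log 4 ≤
      ∑ x, (p x * Real.log (p x / (p x + W * q x)) +
            W * q x * Real.log (W * q x / (p x + W * q x))) ∧
    (∑ x, (p x * Real.log (p x / (p x + W * q x)) +
           W * q x * Real.log (W * q x / (p x + W * q x))) = -Real.log 4 ↔
      ∀ x, p x = W * q x) :=
  stmt_9_general p q W hps hWqs hpq
end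

section
/- For any y in the open interval (0,1) and a, b > 0, a*log y + b*log(1-y) ≤ a*log(a/(a+b)) + b*log(b/(a+b)), with equality iff y = a/(a+b). -/
theorem stmt_10 (a b : ℝ) (ha : 0 < a) (hb : 0 < b)
    (y : ℝ) (hy : y ∈ Set.Ioo (0 : ℝ) 1) :
    a * Real.log y + b * Real.log (1 - y) ≤
      a * Real.log (a / (a + b)) + b * Real.log (b / (a + b)) ∧
    (a * Real.log y + b * Real.log (1 - y) =
      a * Real.log (a / (a + b)) + b * Real.log (b / (a + b)) ↔ y = a / (a + b)) := by
  obtain ⟨hy0, hy1⟩ := hy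
  have hab : 0 < a + b := by linarith
  have h1y : 0 < 1 - y := by linarith
  have hp : 0 < a / (a + b) := div_pos ha hab
  have hq : 0 < b / (a + b) := div_pos hb hab
  have e1 : Real.log (y / (a / (a + b))) = Real.log y - Real.log (a / (a + b)) :=
    Real.log_div hy0.ne' hp.ne'
  have e2 : Real.log ((1 - y) / (b / (a + b))) = Real.log (1 - y) - Real.log (b / (a + b)) :=
    Real.log_div h1y.ne' hq.ne'
  have h1 : Real.log (y / (a / (a + b))) ≤ y / (a / (a + b)) - 1 :=
    Real.log_le_sub_one_of_pos (div_pos hy0 hp)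
  have h2 : Real.log ((1 - y) / (b / (a + b))) ≤ (1 - y) / (b / (a + b)) - 1 :=
    Real.log_le_sub_one_of_pos (div_pos h1y hq)
  have key : a * (y / (a / (a + b)) - 1) + b * ((1 - y) / (b / (a + b)) - 1) = 0 := by
    field_simp
    ring
  have m1 : a * Real.log (y / (a / (a + b))) ≤ a * (y / (a / (a + b)) - 1) :=
    mul_le_mul_of_nonneg_left h1 ha.le
  have m2 : b * Real.log ((1 - y) / (b / (a + b))) ≤ b * ((1 - y) / (b / (a + b)) - 1) :=
    mul_le_mul_of_nonneg_left h2 hb.le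
  constructor
  · nlinarith [m1, m2]
  constructor
  · intro heq
    by_contra hne
    have hy_ne : y / (a / (a + b)) ≠ 1 := by
      intro h
      apply hne
      field_simp at h
      field_simp
      linarith
    have h1' : Real.log (y / (a / (a + b))) < y / (a / (a + b)) - 1 :=
      Real.log_lt_sub_one_of_pos (div_pos hy0 hp) hy_ne
    have m1' : a * Real.log (y / (a / (a + b))) < a * (y / (a / (a + b)) - 1) :=
      (mul_lt_mul_iff_right₀ ha).mpr h1'
    nlinarith [m1', m2]
  · intro heq
    rw [heq, show (1:ℝ) - a / (a + b) = b / (a + b) by field_simp; ring]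
end

section
/- Let α be a finite type and p, q probability mass functions on α with p(x)+q(x) > 0 for all x. If D*(x) = p(x)/(p(x)+q(x)), then ∑ x, p(x)*log(D*(x)) + q(x)*log(1 - D*(x)) ≥ -log 4, with equality if and only if p = q. -/
/-!
Writing `s = p x + q x` and `D = p x / s`, the summand is `-s · H(D)` with `H` the binary entropy
(in nats). Since `H ≤ log 2`, with equality only at `D = 1/2`, and `∑ s = 2`, the sum is at least
`-2 log 2 = -log 4`, with equality iff `p x = q x` for every `x`.
-/

open Real Finset

lemma mul_log_div_add_mul_log_one_sub_div {a b : ℝ} (h : a + b ≠ 0) :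
    a * log (a / (a + b)) + b * log (1 - a / (a + b)) =
      -((a + b) * binEntropy (a / (a + b))) := by
  have hb : 1 - a / (a + b) = b / (a + b) := by field_simp; ring
  rw [binEntropy, hb, log_inv, log_inv]
  field_simp
  ring

lemma div_add_eq_inv_two_iff {a b : ℝ} (h : a + b ≠ 0) : a / (a + b) = 2⁻¹ ↔ a = b := by
  rw [div_eq_iff h]
  constructor <;> intro <;> linarith

lemma sum_mul_binEntropy_le {ι : Type*} (s : Finset ι) (w D : ι → ℝ)
    (hw : ∀ i ∈ s, 0 ≤ w i) :
    ∑ i ∈ s, w i * binEntropy (D i) ≤ (∑ i ∈ s, w i) * log 2 := by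
  rw [sum_mul]
  exact sum_le_sum fun i hi => mul_le_mul_of_nonneg_left binEntropy_le_log_two (hw i hi)

lemma sum_mul_binEntropy_eq_iff {ι : Type*} (s : Finset ι) (w D : ι → ℝ)
    (hw : ∀ i ∈ s, 0 < w i) :
    ∑ i ∈ s, w i * binEntropy (D i) = (∑ i ∈ s, w i) * log 2 ↔ ∀ i ∈ s, D i = 2⁻¹ := by
  rw [sum_mul, sum_eq_sum_iff_of_le fun i hi =>
    mul_le_mul_of_nonneg_left binEntropy_le_log_two (hw i hi).le]
  refine forall₂_congr fun i hi => ?_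
  rw [mul_right_inj' (hw i hi).ne', binEntropy_eq_log_two]

theorem stmt_11_general {α : Type*} [Fintype α] (p q : α → ℝ)
    (hps : ∑ x, p x = 1) (hqs : ∑ x, q x = 1)
    (hpq : ∀ x, 0 < p x + q x) :
    -Real.log 4 ≤
      ∑ x, (p x * Real.log (p x / (p x + q x)) +
            q x * Real.log (1 - p x / (p x + q x))) ∧
    (∑ x, (p x * Real.log (p x / (p x + q x)) +
           q x * Real.log (1 - p x / (p x + q x))) = -Real.log 4 ↔ p = q) := by
  have hlog4 : log 4 = (∑ x, (p x + q x)) * log 2 := by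
    rw [sum_add_distrib, hps, hqs, show (4 : ℝ) = 2 ^ 2 by norm_num, log_pow]
    norm_num
  simp only [mul_log_div_add_mul_log_one_sub_div (hpq _).ne', sum_neg_distrib, neg_le_neg_iff,
    neg_inj, hlog4]
  refine ⟨sum_mul_binEntropy_le _ _ _ fun x _ => (hpq x).le, ?_⟩
  rw [sum_mul_binEntropy_eq_iff _ _ _ fun x _ => hpq x, funext_iff]
  simp only [mem_univ, forall_const, div_add_eq_inv_two_iff (hpq _).ne']

theorem stmt_11 {α : Type*} [Fintype α] (p q : α → ℝ)
    (hp : ∀ x, 0 ≤ p x) (hq : ∀ x, 0 ≤ q x)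
    (hps : ∑ x, p x = 1) (hqs : ∑ x, q x = 1)
    (hpq : ∀ x, 0 < p x + q x) :
    -Real.log 4 ≤
      ∑ x, (p x * Real.log (p x / (p x + q x)) +
            q x * Real.log (1 - p x / (p x + q x))) ∧
    (∑ x, (p x * Real.log (p x / (p x + q x)) +
           q x * Real.log (1 - p x / (p x + q x))) = -Real.log 4 ↔ p = q) :=
  stmt_11_general p q hps hqs hpq
end
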